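/- Let κ = 3^{2/3}/2^{1/3} (so that κ^{3/2} = 3/√2) and θ̄ ∈ ℝ. The curve (r̃(τ), θ̃(τ), ṽ(τ), ũ(τ)) = (κ e^{√2 τ}, θ̄ − e^{(3/√2)τ}, √2, −κ^{3/2} e^{(3/√2)τ}), τ ∈ ℝ, is a solution of the McGehee-regularized system with μ = 0: r' = r v, θ' = u, v' = v²/2 + u² + 2u r^{3/2} + r³ − 1, u' = −uv/2 − 2v r^{3/2}; and it satisfies lim_{τ→−∞} (r̃(τ), θ̃(τ), ṽ(τ), ũ(τ)) = (0, θ̄, √2, 0), i.e. it lies in the unstable set of the equilibrium (0, θ̄, √2, 0) on the collision manifold {r = 0}. -/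

import Mathlib

open Real Filter
open scoped Topology

/-- The constant `κ = 3^{2/3}/2^{1/3}`. -/
noncomputable def kap : ℝ := (3 : ℝ) ^ ((2 : ℝ) / 3) / (2 : ℝ) ^ ((1 : ℝ) / 3)

/-- `r`-component of the explicit ejection solution. -/
noncomputable def rTil (τ : ℝ) : ℝ := kap * Real.exp (Real.sqrt 2 * τ)

/-- `θ`-component of the explicit ejection solution. -/
noncomputable def thetaTil (θb τ : ℝ) : ℝ := θb - Real.exp (3 / Real.sqrt 2 * τ)

/-- `v`-component of the explicit ejection solution. -/
noncomputable def vTil (_τ : ℝ) : ℝ := Real.sqrt 2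

/-- `u`-component of the explicit ejection solution. -/
noncomputable def uTil (τ : ℝ) : ℝ :=
  -(kap ^ ((3 : ℝ) / 2) * Real.exp (3 / Real.sqrt 2 * τ))

/-!
Both exponents are multiples of `√2`, and `κ^{3/2} = 3/√2` makes `r̃^{3/2} = -ũ` and hence
`r̃³ = ũ²`. With `ṽ = √2` the right-hand side of the `v`-equation collapses to
`1 + ũ² - 2ũ² + ũ² - 1 = 0`, and that of the `u`-equation to `(3/√2) ũ = ũ'`.
-/

theorem Real.hasDerivAt_exp_const_mul (c τ : ℝ) :
    HasDerivAt (fun t => exp (c * t)) (c * exp (c * τ)) τ := by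
  simpa [mul_comm] using ((hasDerivAt_id τ).const_mul c).exp

theorem Real.tendsto_exp_const_mul_atBot {c : ℝ} (hc : 0 < c) :
    Tendsto (fun t => exp (c * t)) atBot (𝓝 0) :=
  tendsto_exp_atBot.comp (tendsto_id.const_mul_atBot hc)

theorem three_halves_mul_sqrt_two : 3 / 2 * √2 = 3 / √2 := by
  field_simp
  rw [sq_sqrt zero_le_two]

theorem kap_nonneg : 0 ≤ kap := by unfold kap; positivity

theorem kap_rpow_three_halves : kap ^ ((3 : ℝ) / 2) = 3 / √2 := by
  unfold kap
  rw [div_rpow (by positivity) (by positivity), ← rpow_mul (by norm_num),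
    ← rpow_mul (by norm_num), sqrt_eq_rpow]
  norm_num

theorem rTil_rpow_three_halves (τ : ℝ) : rTil τ ^ ((3 : ℝ) / 2) = -uTil τ := by
  rw [rTil, uTil, neg_neg, mul_rpow kap_nonneg (exp_nonneg _), ← exp_mul, mul_comm _ (3 / 2),
    ← mul_assoc, three_halves_mul_sqrt_two]

theorem rTil_pow_three (τ : ℝ) : rTil τ ^ 3 = uTil τ ^ 2 := by
  have hr : 0 ≤ rTil τ := mul_nonneg kap_nonneg (exp_nonneg _)
  have h := rpow_mul_natCast hr ((3 : ℝ) / 2) 2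
  rw [rTil_rpow_three_halves, neg_sq] at h
  rw [← h]
  norm_num

theorem vTil_sq (τ : ℝ) : vTil τ ^ 2 = 2 := sq_sqrt zero_le_two

theorem hasDerivAt_rTil (τ : ℝ) : HasDerivAt rTil (√2 * rTil τ) τ := by
  have h : HasDerivAt rTil (kap * (√2 * exp (√2 * τ))) τ :=
    (hasDerivAt_exp_const_mul (√2) τ).const_mul kap
  exact h.congr_deriv (by rw [rTil]; ring)

theorem hasDerivAt_uTil (τ : ℝ) : HasDerivAt uTil (3 / √2 * uTil τ) τ := by
  have h : HasDerivAt uTil (-(kap ^ ((3 : ℝ) / 2) * (3 / √2 * exp (3 / √2 * τ)))) τ :=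
    ((hasDerivAt_exp_const_mul (3 / √2) τ).const_mul _).neg
  exact h.congr_deriv (by rw [uTil]; ring)

theorem hasDerivAt_thetaTil (θb τ : ℝ) : HasDerivAt (thetaTil θb) (uTil τ) τ := by
  have h : HasDerivAt (thetaTil θb) (0 - 3 / √2 * exp (3 / √2 * τ)) τ :=
    (hasDerivAt_const τ θb).sub (hasDerivAt_exp_const_mul (3 / √2) τ)
  exact h.congr_deriv (by rw [uTil, kap_rpow_three_halves]; ring)

theorem tendsto_rTil_atBot : Tendsto rTil atBot (𝓝 0) := by
  have h : Tendsto rTil atBot (𝓝 (kap * 0)) :=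
    (tendsto_exp_const_mul_atBot (sqrt_pos.2 two_pos)).const_mul kap
  rwa [mul_zero] at h

theorem tendsto_thetaTil_atBot (θb : ℝ) : Tendsto (thetaTil θb) atBot (𝓝 θb) := by
  have h : Tendsto (thetaTil θb) atBot (𝓝 (θb - 0)) :=
    tendsto_const_nhds.sub (tendsto_exp_const_mul_atBot (by positivity))
  rwa [sub_zero] at h

theorem tendsto_uTil_atBot : Tendsto uTil atBot (𝓝 0) := by
  have h : Tendsto uTil atBot (𝓝 (-(kap ^ ((3 : ℝ) / 2) * 0))) :=
    ((tendsto_exp_const_mul_atBot (by positivity)).const_mul _).neg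
  rwa [mul_zero, neg_zero] at h

/-- The curve `(κ e^{√2 τ}, θ̄ - e^{(3/√2)τ}, √2, -κ^{3/2} e^{(3/√2)τ})` solves the
McGehee-regularized system with `μ = 0`:
`r' = rv`, `θ' = u`, `v' = v²/2 + u² + 2u r^{3/2} + r³ - 1`, `u' = -uv/2 - 2v r^{3/2}`,
and tends to the equilibrium `(0, θ̄, √2, 0)` on the collision manifold as `τ → -∞`. -/
theorem explicit_ejection_solution_mu_zero (θb : ℝ) :
    (∀ τ : ℝ, HasDerivAt rTil (rTil τ * vTil τ) τ) ∧
    (∀ τ : ℝ, HasDerivAt (thetaTil θb) (uTil τ) τ) ∧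
    (∀ τ : ℝ, HasDerivAt vTil
      ((vTil τ) ^ 2 / 2 + (uTil τ) ^ 2 + 2 * uTil τ * (rTil τ) ^ ((3 : ℝ) / 2)
        + (rTil τ) ^ 3 - 1) τ) ∧
    (∀ τ : ℝ, HasDerivAt uTil
      (-(uTil τ * vTil τ) / 2 - 2 * vTil τ * (rTil τ) ^ ((3 : ℝ) / 2)) τ) ∧
    Tendsto (fun τ => (rTil τ, thetaTil θb τ, vTil τ, uTil τ)) atBot
      (𝓝 (0, θb, Real.sqrt 2, 0)) := by
  refine ⟨fun τ => ?_, hasDerivAt_thetaTil θb, fun τ => ?_, fun τ => ?_, ?_⟩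
  · simpa only [vTil, mul_comm] using hasDerivAt_rTil τ
  · refine (hasDerivAt_const τ (√2)).congr_deriv ?_
    rw [rTil_rpow_three_halves, rTil_pow_three, vTil_sq]
    ring
  · refine (hasDerivAt_uTil τ).congr_deriv ?_
    rw [rTil_rpow_three_halves, vTil]
    field_simp
    rw [sq_sqrt zero_le_two]
    ring
  · exact tendsto_rTil_atBot.prodMk_nhds ((tendsto_thetaTil_atBot θb).prodMk_nhds
      (tendsto_const_nhds.prodMk_nhds tendsto_uTil_atBot))
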